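/- For labelled sequent calculus G3Q.K for quantified modal logic, the generalized initial sequents w:A, Γ ⇒ Δ, w:A are derivable for every formula A (not just atomic A). -/
import Mathlib


/-- Formulas of quantified modal logic (predicates named by ℕ, variables ℕ). -/
inductive Fml where
  | atom : ℕ → List ℕ → Fml
  | bot : Fml
  | and : Fml → Fml → Fml
  | or : Fml → Fml → Fml
  | imp : Fml → Fml → Fml
  | all : ℕ → Fml → Fml
  | ex : ℕ → Fml → Fml
  | box : Fml → Fml
  | dia : Fml → Fml
deriving DecidableEq

/-- A varying-domain quantified modal model over worlds `W` and objects `D`. -/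
structure Model (W D : Type) where
  R : W → W → Prop
  dom : W → Set D
  V : ℕ → W → List D → Prop

/-- Satisfaction of a formula at a world under an assignment. -/
def Sat {W D : Type} (M : Model W D) (σ : ℕ → D) (w : W) : Fml → Prop
  | .atom P args => M.V P w (args.map σ)
  | .bot => False
  | .and A B => Sat M σ w A ∧ Sat M σ w B
  | .or A B => Sat M σ w A ∨ Sat M σ w B
  | .imp A B => Sat M σ w A → Sat M σ w B
  | .all x A => ∀ o ∈ M.dom w, Sat M (Function.update σ x o) w A
  | .ex x A => ∃ o ∈ M.dom w, Sat M (Function.update σ x o) w A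
  | .box A => ∀ v, M.R w v → Sat M σ v A
  | .dia A => ∃ v, M.R w v ∧ Sat M σ v A

/-- A quantified modal frame. -/
structure Frame (W D : Type) where
  R : W → W → Prop
  dom : W → Set D

/-- Validity on a frame: truth at every world under every assignment in
every model based on the frame. -/
def ValidOn {W D : Type} (F : Frame W D) (A : Fml) : Prop :=
  ∀ V : ℕ → W → List D → Prop, ∀ σ : ℕ → D, ∀ w : W,
    Sat (Model.mk F.R F.dom V) σ w A

/-- Naive substitution of variable `y` for free occurrences of `x`
(capture-avoiding provided `y` is fresh). -/
def Fml.substV (x y : ℕ) : Fml → Fml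
  | .atom P args => .atom P (args.map fun z => if z = x then y else z)
  | .bot => .bot
  | .and A B => .and (A.substV x y) (B.substV x y)
  | .or A B => .or (A.substV x y) (B.substV x y)
  | .imp A B => .imp (A.substV x y) (B.substV x y)
  | .all z A => if z = x then .all z A else .all z (A.substV x y)
  | .ex z A => if z = x then .ex z A else .ex z (A.substV x y)
  | .box A => .box (A.substV x y)
  | .dia A => .dia (A.substV x y)

/-- All variables (free or bound) occurring in a formula. -/
def Fml.vars : Fml → Set ℕ
  | .atom _ args => {z | z ∈ args}
  | .bot => ∅
  | .and A B => A.vars ∪ B.vars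
  | .or A B => A.vars ∪ B.vars
  | .imp A B => A.vars ∪ B.vars
  | .all z A => insert z A.vars
  | .ex z A => insert z A.vars
  | .box A => A.vars
  | .dia A => A.vars

/-- Items occurring in antecedents of labelled sequents: labelled formulas
`w : A`, domain atoms `x ∈ w`, and relational atoms `w R v`
(labels and variables are both `ℕ`). -/
inductive LSForm where
  | lab : ℕ → Fml → LSForm
  | mem : ℕ → ℕ → LSForm
  | rel : ℕ → ℕ → LSForm
deriving DecidableEq

/-- Variables occurring in an antecedent item. -/
def LSForm.vars : LSForm → Set ℕ
  | .lab _ A => A.vars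
  | .mem x _ => {x}
  | .rel _ _ => ∅

/-- Labels occurring in an antecedent item. -/
def LSForm.labs : LSForm → Set ℕ
  | .lab w _ => {w}
  | .mem _ w => {w}
  | .rel w v => {w, v}

/-- Variables occurring in a sequent (succedents are multisets of labelled
formulas, coded as pairs `(label, formula)`). -/
def seqVars (Γ : Multiset LSForm) (Δ : Multiset (ℕ × Fml)) : Set ℕ :=
  {x | (∃ E ∈ Γ, x ∈ E.vars) ∨ (∃ p ∈ Δ, x ∈ (Prod.snd p).vars)}

/-- Labels occurring in a sequent. -/
def seqLabs (Γ : Multiset LSForm) (Δ : Multiset (ℕ × Fml)) : Set ℕ :=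
  {w | (∃ E ∈ Γ, w ∈ E.labs) ∨ (∃ p ∈ Δ, Prod.fst p = w)}

/-- `Der n Γ Δ`: the labelled sequent `Γ ⇒ Δ` is derivable in the labelled
calculus G3Q.K with height at most `n`. -/
inductive Der : ℕ → Multiset LSForm → Multiset (ℕ × Fml) → Prop where
  | init (n : ℕ) (w P : ℕ) (args : List ℕ) (Γ : Multiset LSForm) (Δ : Multiset (ℕ × Fml)) :
      Der n (.lab w (.atom P args) ::ₘ Γ) ((w, .atom P args) ::ₘ Δ)
  | lbot (n w : ℕ) (Γ : Multiset LSForm) (Δ : Multiset (ℕ × Fml)) :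
      Der n (.lab w .bot ::ₘ Γ) Δ
  | land {n : ℕ} {w : ℕ} {A B : Fml} {Γ : Multiset LSForm} {Δ : Multiset (ℕ × Fml)} :
      Der n (.lab w A ::ₘ .lab w B ::ₘ Γ) Δ →
      Der (n + 1) (.lab w (.and A B) ::ₘ Γ) Δ
  | rand {n w} {A B : Fml} {Γ : Multiset LSForm} {Δ : Multiset (ℕ × Fml)} :
      Der n Γ ((w, A) ::ₘ Δ) → Der n Γ ((w, B) ::ₘ Δ) →
      Der (n + 1) Γ ((w, .and A B) ::ₘ Δ)
  | lor {n w} {A B : Fml} {Γ : Multiset LSForm} {Δ : Multiset (ℕ × Fml)} :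
      Der n (.lab w A ::ₘ Γ) Δ → Der n (.lab w B ::ₘ Γ) Δ →
      Der (n + 1) (.lab w (.or A B) ::ₘ Γ) Δ
  | ror {n w} {A B : Fml} {Γ : Multiset LSForm} {Δ : Multiset (ℕ × Fml)} :
      Der n Γ ((w, A) ::ₘ (w, B) ::ₘ Δ) →
      Der (n + 1) Γ ((w, .or A B) ::ₘ Δ)
  | limp {n w} {A B : Fml} {Γ : Multiset LSForm} {Δ : Multiset (ℕ × Fml)} :
      Der n Γ ((w, A) ::ₘ Δ) → Der n (.lab w B ::ₘ Γ) Δ →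
      Der (n + 1) (.lab w (.imp A B) ::ₘ Γ) Δ
  | rimp {n w} {A B : Fml} {Γ : Multiset LSForm} {Δ : Multiset (ℕ × Fml)} :
      Der n (.lab w A ::ₘ Γ) ((w, B) ::ₘ Δ) →
      Der (n + 1) Γ ((w, .imp A B) ::ₘ Δ)
  | lall {n w x y} {A : Fml} {Γ : Multiset LSForm} {Δ : Multiset (ℕ × Fml)} :
      Der n (.lab w (A.substV x y) ::ₘ .mem y w ::ₘ .lab w (.all x A) ::ₘ Γ) Δ →
      Der (n + 1) (.mem y w ::ₘ .lab w (.all x A) ::ₘ Γ) Δ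
  | rall {n w x z} {A : Fml} {Γ : Multiset LSForm} {Δ : Multiset (ℕ × Fml)} :
      z ∉ seqVars Γ ((w, .all x A) ::ₘ Δ) →
      Der n (.mem z w ::ₘ Γ) ((w, A.substV x z) ::ₘ Δ) →
      Der (n + 1) Γ ((w, .all x A) ::ₘ Δ)
  | lex {n w x z} {A : Fml} {Γ : Multiset LSForm} {Δ : Multiset (ℕ × Fml)} :
      z ∉ seqVars (.lab w (.ex x A) ::ₘ Γ) Δ →
      Der n (.mem z w ::ₘ .lab w (A.substV x z) ::ₘ Γ) Δ →
      Der (n + 1) (.lab w (.ex x A) ::ₘ Γ) Δ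
  | rex {n w x y} {A : Fml} {Γ : Multiset LSForm} {Δ : Multiset (ℕ × Fml)} :
      Der n (.mem y w ::ₘ Γ) ((w, A.substV x y) ::ₘ (w, .ex x A) ::ₘ Δ) →
      Der (n + 1) (.mem y w ::ₘ Γ) ((w, .ex x A) ::ₘ Δ)
  | lbox {n w v} {A : Fml} {Γ : Multiset LSForm} {Δ : Multiset (ℕ × Fml)} :
      Der n (.lab v A ::ₘ .rel w v ::ₘ .lab w (.box A) ::ₘ Γ) Δ →
      Der (n + 1) (.rel w v ::ₘ .lab w (.box A) ::ₘ Γ) Δ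
  | rbox {n w u} {A : Fml} {Γ : Multiset LSForm} {Δ : Multiset (ℕ × Fml)} :
      u ∉ seqLabs Γ ((w, .box A) ::ₘ Δ) →
      Der n (.rel w u ::ₘ Γ) ((u, A) ::ₘ Δ) →
      Der (n + 1) Γ ((w, .box A) ::ₘ Δ)
  | ldia {n w u} {A : Fml} {Γ : Multiset LSForm} {Δ : Multiset (ℕ × Fml)} :
      u ∉ seqLabs (.lab w (.dia A) ::ₘ Γ) Δ →
      Der n (.rel w u ::ₘ .lab u A ::ₘ Γ) Δ →
      Der (n + 1) (.lab w (.dia A) ::ₘ Γ) Δ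
  | rdia {n w v} {A : Fml} {Γ : Multiset LSForm} {Δ : Multiset (ℕ × Fml)} :
      Der n (.rel w v ::ₘ Γ) ((w, .dia A) ::ₘ (v, A) ::ₘ Δ) →
      Der (n + 1) (.rel w v ::ₘ Γ) ((w, .dia A) ::ₘ Δ)


namespace GenInit

/-- Size of a formula. -/
def fsize : Fml → ℕ
  | .atom _ _ => 0
  | .bot => 0
  | .and A B => fsize A + fsize B + 1
  | .or A B => fsize A + fsize B + 1
  | .imp A B => fsize A + fsize B + 1
  | .all _ A => fsize A + 1
  | .ex _ A => fsize A + 1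
  | .box A => fsize A + 1
  | .dia A => fsize A + 1

lemma fsize_substV (x y : ℕ) (A : Fml) : fsize (A.substV x y) = fsize A := by
  induction A with
  | atom P args => rfl
  | bot => rfl
  | and A B ihA ihB => simp [Fml.substV, fsize, ihA, ihB]
  | or A B ihA ihB => simp [Fml.substV, fsize, ihA, ihB]
  | imp A B ihA ihB => simp [Fml.substV, fsize, ihA, ihB]
  | all z A ih => by_cases h : z = x <;> simp [Fml.substV, h, fsize, ih]
  | ex z A ih => by_cases h : z = x <;> simp [Fml.substV, h, fsize, ih]
  | box A ih => simp [Fml.substV, fsize, ih]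
  | dia A ih => simp [Fml.substV, fsize, ih]

lemma vars_finite (A : Fml) : A.vars.Finite := by
  induction A with
  | atom P args => exact args.finite_toSet
  | bot => exact Set.finite_empty
  | and A B ihA ihB => exact ihA.union ihB
  | or A B ihA ihB => exact ihA.union ihB
  | imp A B ihA ihB => exact ihA.union ihB
  | all z A ih => exact ih.insert z
  | ex z A ih => exact ih.insert z
  | box A ih => exact ih
  | dia A ih => exact ih

lemma lsvars_finite (E : LSForm) : E.vars.Finite := by
  cases E with
  | lab w A => exact vars_finite A
  | mem x w => exact Set.finite_singleton x
  | rel w v => exact Set.finite_empty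

lemma lslabs_finite (E : LSForm) : E.labs.Finite := by
  cases E with
  | lab w A => exact Set.finite_singleton w
  | mem x w => exact Set.finite_singleton w
  | rel w v => exact (Set.finite_singleton v).insert w

lemma seqVars_finite (Γ : Multiset LSForm) (Δ : Multiset (ℕ × Fml)) :
    (seqVars Γ Δ).Finite := by
  have h1 : {x | ∃ E ∈ Γ, x ∈ E.vars}.Finite := by
    have : {x | ∃ E ∈ Γ, x ∈ E.vars} = ⋃ E ∈ {E | E ∈ Γ}, E.vars := by
      ext x; simp
    rw [this]
    exact Set.Finite.biUnion (Multiset.finite_toSet Γ) (fun E _ => lsvars_finite E)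
  have h2 : {x | ∃ p ∈ Δ, x ∈ (Prod.snd p).vars}.Finite := by
    have : {x | ∃ p ∈ Δ, x ∈ (Prod.snd p).vars}
        = ⋃ p ∈ {p | p ∈ Δ}, (Prod.snd p).vars := by
      ext x; simp
    rw [this]
    exact Set.Finite.biUnion (Multiset.finite_toSet Δ) (fun p _ => vars_finite _)
  have : seqVars Γ Δ ⊆ {x | ∃ E ∈ Γ, x ∈ E.vars} ∪ {x | ∃ p ∈ Δ, x ∈ (Prod.snd p).vars} := by
    intro x hx; exact hx
  exact (h1.union h2).subset this

lemma seqLabs_finite (Γ : Multiset LSForm) (Δ : Multiset (ℕ × Fml)) :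
    (seqLabs Γ Δ).Finite := by
  have h1 : {x | ∃ E ∈ Γ, x ∈ E.labs}.Finite := by
    have : {x | ∃ E ∈ Γ, x ∈ E.labs} = ⋃ E ∈ {E | E ∈ Γ}, E.labs := by
      ext x; simp
    rw [this]
    exact Set.Finite.biUnion (Multiset.finite_toSet Γ) (fun E _ => lslabs_finite E)
  have h2 : {x | ∃ p ∈ Δ, Prod.fst p = x}.Finite := by
    have : {x | ∃ p ∈ Δ, Prod.fst p = x} = ⋃ p ∈ {p | p ∈ Δ}, {Prod.fst p} := by
      ext x; simp [eq_comm]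
    rw [this]
    exact Set.Finite.biUnion (Multiset.finite_toSet Δ) (fun p _ => Set.finite_singleton _)
  have : seqLabs Γ Δ ⊆ {x | ∃ E ∈ Γ, x ∈ E.labs} ∪ {x | ∃ p ∈ Δ, Prod.fst p = x} := by
    intro x hx; exact hx
  exact (h1.union h2).subset this

lemma exists_fresh {s : Set ℕ} (h : s.Finite) : ∃ z, z ∉ s :=
  h.infinite_compl.nonempty

lemma der_succ {n : ℕ} {Γ : Multiset LSForm} {Δ : Multiset (ℕ × Fml)}
    (h : Der n Γ Δ) : Der (n + 1) Γ Δ := by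
  induction h with
  | init => exact .init _ _ _ _ _ _
  | lbot => exact .lbot _ _ _ _
  | land _ ih => exact .land ih
  | rand _ _ ih1 ih2 => exact .rand ih1 ih2
  | lor _ _ ih1 ih2 => exact .lor ih1 ih2
  | ror _ ih => exact .ror ih
  | limp _ _ ih1 ih2 => exact .limp ih1 ih2
  | rimp _ ih => exact .rimp ih
  | lall _ ih => exact .lall ih
  | rall hz _ ih => exact .rall hz ih
  | lex hz _ ih => exact .lex hz ih
  | rex _ ih => exact .rex ih
  | lbox _ ih => exact .lbox ih
  | rbox hu _ ih => exact .rbox hu ih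
  | ldia hu _ ih => exact .ldia hu ih
  | rdia _ ih => exact .rdia ih

lemma der_le {n m : ℕ} {Γ : Multiset LSForm} {Δ : Multiset (ℕ × Fml)}
    (h : Der n Γ Δ) (hnm : n ≤ m) : Der m Γ Δ := by
  induction hnm with
  | refl => exact h
  | step _ ih => exact der_succ ih

lemma main : ∀ (k : ℕ) (A : Fml), fsize A ≤ k → ∀ (w : ℕ) (Γ : Multiset LSForm)
    (Δ : Multiset (ℕ × Fml)), ∃ n : ℕ, Der n (.lab w A ::ₘ Γ) ((w, A) ::ₘ Δ) := by
  intro k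
  induction k with
  | zero =>
    intro A hA w Γ Δ
    cases A with
    | atom P args => exact ⟨0, .init 0 w P args Γ Δ⟩
    | bot => exact ⟨0, .lbot 0 w Γ _⟩
    | and A B => simp [fsize] at hA
    | or A B => simp [fsize] at hA
    | imp A B => simp [fsize] at hA
    | all x A => simp [fsize] at hA
    | ex x A => simp [fsize] at hA
    | box A => simp [fsize] at hA
    | dia A => simp [fsize] at hA
  | succ k ih =>
    intro A hA w Γ Δ
    cases A with
    | atom P args => exact ⟨0, .init 0 w P args Γ Δ⟩
    | bot => exact ⟨0, .lbot 0 w Γ _⟩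
    | and A B =>
      have hAk : fsize A ≤ k := by simp [fsize] at hA; omega
      have hBk : fsize B ≤ k := by simp [fsize] at hA; omega
      obtain ⟨n1, h1⟩ := ih A hAk w (.lab w B ::ₘ Γ) Δ
      obtain ⟨n2, h2⟩ := ih B hBk w (.lab w A ::ₘ Γ) Δ
      rw [Multiset.cons_swap] at h2
      refine ⟨max n1 n2 + 1 + 1, .rand ?_ ?_⟩
      · exact .land (der_le h1 (le_max_left _ _))
      · exact .land (der_le h2 (le_max_right _ _))
    | or A B =>
      have hAk : fsize A ≤ k := by simp [fsize] at hA; omega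
      have hBk : fsize B ≤ k := by simp [fsize] at hA; omega
      obtain ⟨n1, h1⟩ := ih A hAk w Γ ((w, B) ::ₘ Δ)
      obtain ⟨n2, h2⟩ := ih B hBk w Γ ((w, A) ::ₘ Δ)
      rw [Multiset.cons_swap] at h2
      refine ⟨max n1 n2 + 1 + 1, .lor ?_ ?_⟩
      · exact .ror (der_le h1 (le_max_left _ _))
      · exact .ror (der_le h2 (le_max_right _ _))
    | imp A B =>
      have hAk : fsize A ≤ k := by simp [fsize] at hA; omega
      have hBk : fsize B ≤ k := by simp [fsize] at hA; omega
      obtain ⟨n1, h1⟩ := ih A hAk w Γ ((w, B) ::ₘ Δ)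
      obtain ⟨n2, h2⟩ := ih B hBk w (.lab w A ::ₘ Γ) Δ
      refine ⟨max n1 n2 + 1 + 1, .rimp ?_⟩
      rw [Multiset.cons_swap]
      exact .limp (der_le h1 (le_max_left _ _)) (der_le h2 (le_max_right _ _))
    | all x A =>
      have hAk : fsize A ≤ k := by simp [fsize] at hA; omega
      obtain ⟨z, hz⟩ := exists_fresh
        (seqVars_finite (.lab w (.all x A) ::ₘ Γ) ((w, .all x A) ::ₘ Δ))
      obtain ⟨n, h⟩ := ih (A.substV x z) (by rw [fsize_substV]; exact hAk) w
        (.mem z w ::ₘ .lab w (.all x A) ::ₘ Γ) Δ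
      exact ⟨n + 1 + 1, .rall hz (.lall h)⟩
    | ex x A =>
      have hAk : fsize A ≤ k := by simp [fsize] at hA; omega
      obtain ⟨z, hz⟩ := exists_fresh
        (seqVars_finite (.lab w (.ex x A) ::ₘ Γ) ((w, .ex x A) ::ₘ Δ))
      obtain ⟨n, h⟩ := ih (A.substV x z) (by rw [fsize_substV]; exact hAk) w
        (.mem z w ::ₘ Γ) ((w, .ex x A) ::ₘ Δ)
      rw [Multiset.cons_swap] at h
      refine ⟨n + 1 + 1, .lex ?_ (.rex h)⟩
      · intro hzin
        exact hz (by
          rcases hzin with hl | hr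
          · exact Or.inl hl
          · exact Or.inr hr)
    | box A =>
      have hAk : fsize A ≤ k := by simp [fsize] at hA; omega
      obtain ⟨u, hu⟩ := exists_fresh
        (seqLabs_finite (.lab w (.box A) ::ₘ Γ) ((w, .box A) ::ₘ Δ))
      obtain ⟨n, h⟩ := ih A hAk u (.rel w u ::ₘ .lab w (.box A) ::ₘ Γ) Δ
      exact ⟨n + 1 + 1, .rbox hu (.lbox h)⟩
    | dia A =>
      have hAk : fsize A ≤ k := by simp [fsize] at hA; omega
      obtain ⟨u, hu⟩ := exists_fresh
        (seqLabs_finite (.lab w (.dia A) ::ₘ Γ) ((w, .dia A) ::ₘ Δ))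
      obtain ⟨n, h⟩ := ih A hAk u (.rel w u ::ₘ Γ) ((w, .dia A) ::ₘ Δ)
      rw [Multiset.cons_swap] at h
      rw [Multiset.cons_swap (u, A) ((w, Fml.dia A))] at h
      refine ⟨n + 1 + 1, .ldia hu ?_⟩
      exact Der.rdia (w := w) (v := u) (Γ := .lab u A ::ₘ Γ) (Δ := Δ) (A := A) h

end GenInit

/-- in G3Q.K the generalized initial sequents
`w:A, Γ ⇒ Δ, w:A` are derivable for every formula `A`. -/
theorem generalized_initial_sequents_derivable
    (w : ℕ) (A : Fml) (Γ : Multiset LSForm) (Δ : Multiset (ℕ × Fml)) :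
    ∃ n : ℕ, Der n (.lab w A ::ₘ Γ) ((w, A) ::ₘ Δ) := GenInit.main (GenInit.fsize A) A le_rfl w Γ Δ
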